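/- arXiv:math/0602235 — 3 statements merged into one kernel-verified Lean document; each statement's English description precedes it below -/
import Mathlib

section
/- Let (A, m, k) be a noetherian commutative local ring and C an A-module with mC ≠ C. If Tor_1^A(C, k) = 0, then every sequence x_1, ..., x_m of elements of A that is a regular sequence on C is also a regular sequence on A. -/
/-!
Tensoring with `C` is right exact, and comparing a projective resolution of `k` with
`0 → 𝔪 → A → k → 0` turns `Tor₁(C, k) = 0` into injectivity of `𝔪 ⊗ C → C`.
If `y ∉ I` and `𝔪 y ⊆ I`, the ideal `I + (y)` is the pushout of `A ← 𝔪 → I`, `t ↦ t y`;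
this lets injectivity of `I ⊗ C → C` descend from `I + (y)` to `I`, so it holds for every
`𝔪`-primary ideal. Now let `a C ⊆ q C`. If `a ∉ I := q + 𝔪ⁿ`, some multiple `b = s a` has
`b ∉ I` and `𝔪 b ⊆ I`, and the same pushout for `I + (b)` forces `C = 𝔪 C`. Hence
`a ∈ ⋂ₙ (q + 𝔪ⁿ) = q` by Krull: the annihilator of `C / q C` is `q`, so every element that is
regular on `C / q C` is regular on `A / q`.
-/

open CategoryTheory Limits IsLocalRing

/-- `Tor_n^A(C, D) = 0`. -/
def TorIsZero (A : Type) [CommRing A] (n : ℕ) (C D : Type)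
    [AddCommGroup C] [Module A C] [AddCommGroup D] [Module A D] : Prop :=
  IsZero (((Tor (ModuleCat A) n).obj (ModuleCat.of A C)).obj (ModuleCat.of A D))

open LinearMap TensorProduct

theorem rTensor_subtype_top_injective {R M N : Type*} [CommSemiring R] [AddCommMonoid M]
    [Module R M] [AddCommMonoid N] [Module R N] :
    Function.Injective ((⊤ : Submodule R N).subtype.rTensor M) :=
  (LinearEquiv.rTensor M Submodule.topEquiv).injective

section Tensor

variable {R : Type*} [CommRing R] (M : Type*) [AddCommGroup M] [Module R M]
  {K P Q J : Type*} [AddCommGroup K] [Module R K] [AddCommGroup P] [Module R P]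
  [AddCommGroup Q] [Module R Q] [AddCommGroup J] [Module R J]

theorem rTensor_comp_inr_injective_of_exact {δ : K →ₗ[R] P × Q} {π : P × Q →ₗ[R] J}
    (hδπ : Function.Exact δ π) (hπ : Function.Surjective π)
    (hδ : Function.Injective ((fst R P Q ∘ₗ δ).rTensor M)) :
    Function.Injective ((π ∘ₗ inr R P Q).rTensor M) := by
  refine (injective_iff_map_eq_zero _).mpr fun ξ hξ => ?_
  rw [rTensor_comp_apply] at hξ
  obtain ⟨η, hη⟩ := (rTensor_exact M hδπ hπ _).mp hξ
  have hη0 : η = 0 := hδ <| by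
    rw [map_zero, rTensor_comp_apply, hη, ← rTensor_comp_apply, fst_comp_inr, rTensor_zero,
      LinearMap.zero_apply]
  rw [← rTensor_id_apply M Q ξ, ← snd_comp_inr R P Q, rTensor_comp_apply, ← hη, hη0, map_zero,
    map_zero]

theorem lTensor_ker_subtype_injective_of_exact {P₂ P₁ P₀ N : Type*} [AddCommGroup P₂]
    [Module R P₂] [AddCommGroup P₁] [Module R P₁] [AddCommGroup P₀] [Module R P₀]
    [AddCommGroup N] [Module R N] (d₂ : P₂ →ₗ[R] P₁) (d₁ : P₁ →ₗ[R] P₀) (ε : P₀ →ₗ[R] N)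
    (hd : d₁ ∘ₗ d₂ = 0) (hε : Function.Exact d₁ ε)
    (hM : ∀ x, d₁.lTensor M x = 0 → ∃ y, d₂.lTensor M y = x) :
    Function.Injective ((ker ε).subtype.lTensor M) := by
  let e : P₁ →ₗ[R] ker ε := codRestrict _ d₁ hε.apply_apply_eq_zero
  have he : Function.Surjective e := fun x => by
    obtain ⟨y, hy⟩ := (hε x).mp x.2
    exact ⟨y, Subtype.ext hy⟩
  have hed : e ∘ₗ d₂ = 0 := by
    ext y
    exact congr($hd y)
  refine (injective_iff_map_eq_zero _).mpr fun ζ hζ => ?_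
  obtain ⟨ζ, rfl⟩ := lTensor_surjective M he ζ
  obtain ⟨ω, rfl⟩ := hM ζ (by rwa [← lTensor_comp_apply] at hζ)
  rw [← lTensor_comp_apply, hed, lTensor_zero, LinearMap.zero_apply]

theorem lTensor_ker_subtype_injective_of_comp_eq {P Q N : Type*} [AddCommGroup P] [Module R P]
    [AddCommGroup Q] [Module R Q] [AddCommGroup N] [Module R N] {g : P →ₗ[R] N}
    {g' : Q →ₗ[R] N} {σ : Q →ₗ[R] P} {τ : P →ₗ[R] Q} (hσ : g ∘ₗ σ = g') (hτ : g' ∘ₗ τ = g)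
    (hg : Function.Injective ((ker g).subtype.lTensor M)) :
    Function.Injective ((ker g').subtype.lTensor M) := by
  let σ₀ : ker g' →ₗ[R] ker g := σ.restrict fun x hx => by
    rwa [mem_ker, ← LinearMap.comp_apply, hσ]
  let τ₀ : ker g →ₗ[R] ker g' := τ.restrict fun x hx => by
    rwa [mem_ker, ← LinearMap.comp_apply, hτ]
  let δ : Q →ₗ[R] ker g' := codRestrict _ (τ ∘ₗ σ - LinearMap.id) fun x => by
    rw [mem_ker, LinearMap.sub_apply, LinearMap.comp_apply, LinearMap.id_apply, map_sub,
      ← LinearMap.comp_apply g' τ, hτ, ← LinearMap.comp_apply g σ, hσ, sub_self]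
  -- `x = τ (σ x) - (τ (σ x) - x)` factors the identity of `ker g'` through `ker g × Q`.
  have hsplit : τ₀ ∘ₗ σ₀ - δ ∘ₗ (ker g').subtype = LinearMap.id := by
    ext
    simp [σ₀, τ₀, δ]
  refine (injective_iff_map_eq_zero _).mpr fun ζ hζ => ?_
  have hσ₀ : σ₀.lTensor M ζ = 0 := hg <| by
    rw [← lTensor_comp_apply, show (ker g).subtype ∘ₗ σ₀ = σ ∘ₗ (ker g').subtype from rfl,
      lTensor_comp_apply, hζ, map_zero, map_zero]
  rw [← lTensor_id_apply M _ ζ, ← hsplit, lTensor_sub, LinearMap.sub_apply, lTensor_comp_apply,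
    lTensor_comp_apply, hσ₀, hζ, map_zero, map_zero, sub_zero]

end Tensor

namespace Ideal

theorem exists_mul_notMem_le_colon {R : Type*} [CommSemiring R] {I J : Ideal R} {a : R} {n : ℕ}
    (hn : J ^ n ≤ I.colon {a}) (ha : a ∉ I) : ∃ s, s * a ∉ I ∧ J ≤ I.colon {s * a} := by
  induction n generalizing a with
  | zero =>
    rw [pow_zero, one_eq_top, top_le_iff] at hn
    have h1 : (1 : R) ∈ I.colon {a} := hn ▸ Submodule.mem_top
    exact absurd (by simpa using Submodule.mem_colon_singleton.mp h1) ha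
  | succ n ih =>
    by_cases hJ : J ≤ I.colon {a}
    · exact ⟨1, by rwa [one_mul], by rwa [one_mul]⟩
    obtain ⟨t, ht, hta⟩ := SetLike.not_le_iff_exists.mp hJ
    rw [Submodule.mem_colon_singleton, smul_eq_mul] at hta
    have hn' : J ^ n ≤ I.colon {t * a} := fun x hx => by
      rw [Submodule.mem_colon_singleton, smul_eq_mul, ← mul_assoc]
      exact Submodule.mem_colon_singleton.mp (hn (pow_succ J n ▸ mul_mem_mul hx ht))
    obtain ⟨s, hs, hJs⟩ := ih hn' hta
    exact ⟨s * t, by rwa [mul_assoc], by rwa [mul_assoc]⟩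

variable {A : Type*} [CommRing A] (I : Ideal A) (y : A)

def pushoutToSupSpan : A × I →ₗ[A] ↥(I ⊔ span {y}) :=
  codRestrict _ (toSpanSingleton A A y ∘ₗ fst A A I + I.subtype ∘ₗ snd A A I) fun p =>
    add_mem (Submodule.mem_sup_right (Submodule.smul_mem _ p.1 (mem_span_singleton_self y)))
      (Submodule.mem_sup_left p.2.2)

def colonToProd : ↥(I.colon {y}) →ₗ[A] A × I :=
  (I.colon {y}).subtype.prod <| -codRestrict I (toSpanSingleton A A y ∘ₗ (I.colon {y}).subtype)
    fun t => Submodule.mem_colon_singleton.mp t.2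

@[simp] lemma coe_pushoutToSupSpan_apply (p : A × I) :
    (pushoutToSupSpan I y p : A) = p.1 * y + p.2 := rfl

@[simp] lemma colonToProd_apply (t : I.colon {y}) :
    colonToProd I y t = ((t : A), -⟨t * y, Submodule.mem_colon_singleton.mp t.2⟩) := rfl

theorem exact_colonToProd_pushoutToSupSpan :
    Function.Exact (colonToProd I y) (pushoutToSupSpan I y) := by
  intro p
  constructor
  · obtain ⟨s, i⟩ := p
    intro h
    have hsi : s * y + i = 0 := by simpa using congrArg Subtype.val h
    have hs : s ∈ I.colon {y} := Submodule.mem_colon_singleton.mpr <| by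
      rw [smul_eq_mul, eq_neg_of_add_eq_zero_left hsi]
      exact neg_mem i.2
    exact ⟨⟨s, hs⟩, Prod.ext rfl (Subtype.ext (neg_eq_of_add_eq_zero_right hsi))⟩
  · rintro ⟨t, rfl⟩
    ext
    simp

theorem pushoutToSupSpan_surjective : Function.Surjective (pushoutToSupSpan I y) := by
  rintro ⟨x, hx⟩
  obtain ⟨i, hi, _, hs, rfl⟩ := Submodule.mem_sup.mp hx
  obtain ⟨s, rfl⟩ := mem_span_singleton'.mp hs
  exact ⟨(s, ⟨i, hi⟩), Subtype.ext (add_comm _ _)⟩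

theorem pushoutToSupSpan_comp_inr :
    pushoutToSupSpan I y ∘ₗ inr A A I = Submodule.inclusion le_sup_left := by
  ext
  simp

variable (C : Type*) [AddCommGroup C] [Module A C]

theorem rTensor_subtype_injective_of_sup_span
    (hcolon : Function.Injective ((I.colon {y}).subtype.rTensor C))
    (hsup : Function.Injective ((I ⊔ span {y}).subtype.rTensor C)) :
    Function.Injective (I.subtype.rTensor C) := by
  have hinj := rTensor_comp_inr_injective_of_exact C (exact_colonToProd_pushoutToSupSpan I y)
    (pushoutToSupSpan_surjective I y) hcolon
  rw [pushoutToSupSpan_comp_inr] at hinj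
  rw [← Submodule.subtype_comp_inclusion _ _ (le_sup_left : I ≤ I ⊔ span {y}), rTensor_comp]
  exact hsup.comp hinj

theorem colon_smul_top_eq_top
    (hsup : Function.Injective ((I ⊔ span {y}).subtype.rTensor C))
    (hyC : ∀ c : C, y • c ∈ I • (⊤ : Submodule A C)) :
    I.colon {y} • (⊤ : Submodule A C) = ⊤ := by
  refine eq_top_iff.mpr fun c _ => ?_
  obtain ⟨η, hη⟩ := (subtype_rTensor_range C I).ge (hyC c)
  set ξ : (A × I) ⊗[A] C := ((1 : A), (0 : I)) ⊗ₜ c - (inr A A I).rTensor C η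
  have hξ : (pushoutToSupSpan I y).rTensor C ξ = 0 := by
    refine hsup ((TensorProduct.lid A C).injective ?_)
    have hinr : (I ⊔ span {y}).subtype ∘ₗ pushoutToSupSpan I y ∘ₗ inr A A I = I.subtype := by
      ext
      simp
    rw [map_zero, map_zero, ← rTensor_comp_apply, map_sub, map_sub, ← rTensor_comp_apply,
      LinearMap.comp_assoc, hinr]
    simp only [LinearMap.comp_apply, LinearEquiv.coe_coe] at hη
    simp [hη]
  obtain ⟨ζ, hζ⟩ := (rTensor_exact C (exact_colonToProd_pushoutToSupSpan I y)
    (pushoutToSupSpan_surjective I y) ξ).mp hξ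
  refine (subtype_rTensor_range C _).le ⟨ζ, ?_⟩
  have hfst : fst A A I ∘ₗ colonToProd I y = (I.colon {y}).subtype := rfl
  simp only [LinearMap.comp_apply, LinearEquiv.coe_coe]
  rw [← hfst, rTensor_comp_apply, hζ, map_sub, ← rTensor_comp_apply, fst_comp_inr, rTensor_zero]
  simp

section IsLocalRing

variable [IsLocalRing A]

theorem colon_singleton_eq_maximalIdeal (hyI : y ∉ I) (hmy : maximalIdeal A ≤ I.colon {y}) :
    I.colon {y} = maximalIdeal A := by
  refine le_antisymm (le_maximalIdeal fun htop => hyI ?_) hmy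
  simpa using Submodule.mem_colon_singleton.mp (htop ▸ Submodule.mem_top : (1 : A) ∈ I.colon {y})

variable [IsNoetherianRing A]

theorem rTensor_subtype_injective_of_pow_le
    (hm : Function.Injective ((maximalIdeal A).subtype.rTensor C)) {n : ℕ} {I : Ideal A}
    (hI : maximalIdeal A ^ n ≤ I) : Function.Injective (I.subtype.rTensor C) := by
  induction I using IsNoetherian.induction with | _ I IH => ?_
  by_cases h1 : (1 : A) ∈ I
  · rw [(eq_top_iff_one I).mpr h1]
    exact rTensor_subtype_top_injective
  have hIcolon : I ≤ I.colon {1} := fun x hx => Submodule.mem_colon_singleton.mpr (by simpa)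
  obtain ⟨s, hs, hms⟩ := exists_mul_notMem_le_colon (hI.trans hIcolon) h1
  rw [mul_one] at hs hms
  refine rTensor_subtype_injective_of_sup_span I s C ?_ ?_
  · rwa [colon_singleton_eq_maximalIdeal I s hs hms]
  · refine IH _ (lt_of_le_of_ne le_sup_left fun h => hs ?_) (hI.trans le_sup_left)
    exact h ▸ Submodule.mem_sup_right (mem_span_singleton_self s)

theorem mem_sup_pow_of_forall_smul_mem (hmC : maximalIdeal A • (⊤ : Submodule A C) ≠ ⊤)
    (hm : Function.Injective ((maximalIdeal A).subtype.rTensor C)) {q : Ideal A} {a : A}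
    (ha : ∀ c : C, a • c ∈ q • (⊤ : Submodule A C)) (n : ℕ) : a ∈ q ⊔ maximalIdeal A ^ n := by
  by_contra haI
  have hn : maximalIdeal A ^ n ≤ (q ⊔ maximalIdeal A ^ n).colon {a} := fun x hx =>
    Submodule.mem_colon_singleton.mpr (Submodule.mem_sup_right (mul_mem_right a _ hx))
  obtain ⟨s, hs, hms⟩ := exists_mul_notMem_le_colon hn haI
  refine hmC ?_
  rw [← colon_singleton_eq_maximalIdeal _ _ hs hms]
  refine colon_smul_top_eq_top _ _ C ?_ fun c => ?_
  · exact rTensor_subtype_injective_of_pow_le C hm (le_sup_right.trans le_sup_left)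
  · rw [mul_smul]
    exact Submodule.smul_mem _ s (Submodule.smul_mono_left le_sup_left (ha c))

theorem mem_of_forall_mem_sup_pow {I q : Ideal A} (hI : I ≠ ⊤) {a : A}
    (h : ∀ n, a ∈ q ⊔ I ^ n) : a ∈ q := by
  rw [← Submodule.Quotient.mk_eq_zero, ← Submodule.mem_bot A,
    ← I.iInf_pow_smul_eq_bot_of_isLocalRing (M := A ⧸ q) hI, Submodule.mem_iInf]
  intro n
  obtain ⟨x, hx, w, hw, rfl⟩ := Submodule.mem_sup.mp (h n)
  have hxw : (Submodule.Quotient.mk (x + w) : A ⧸ q) = w • Submodule.Quotient.mk 1 := by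
    rw [Submodule.Quotient.mk_add, (Submodule.Quotient.mk_eq_zero q).mpr hx, zero_add,
      ← Submodule.Quotient.mk_smul, smul_eq_mul, mul_one]
  rw [hxw]
  exact Submodule.smul_mem_smul hw Submodule.mem_top

theorem annihilator_quotient_smul_top_eq (hmC : maximalIdeal A • (⊤ : Submodule A C) ≠ ⊤)
    (hm : Function.Injective ((maximalIdeal A).subtype.rTensor C)) (q : Ideal A) :
    Module.annihilator A (C ⧸ q • (⊤ : Submodule A C)) = q := by
  refine le_antisymm (fun a ha => ?_) fun a ha => ?_
  · rw [Submodule.annihilator_quotient, Submodule.mem_colon] at ha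
    exact mem_of_forall_mem_sup_pow (maximalIdeal.isMaximal A).ne_top
      (mem_sup_pow_of_forall_smul_mem C hmC hm fun c => ha c trivial)
  · rw [Submodule.annihilator_quotient, Submodule.mem_colon]
    exact fun c _ => Submodule.smul_mem_smul ha Submodule.mem_top

end IsLocalRing

end Ideal

theorem IsSMulRegular.quotient_annihilator {R M : Type*} [CommRing R] [AddCommGroup M]
    [Module R M] {x : R} (hx : IsSMulRegular M x) :
    IsSMulRegular (R ⧸ Module.annihilator R M) x := by
  intro a b hab
  obtain ⟨a, rfl⟩ := Submodule.Quotient.mk_surjective _ a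
  obtain ⟨b, rfl⟩ := Submodule.Quotient.mk_surjective _ b
  dsimp only at hab
  rw [← Submodule.Quotient.mk_smul, ← Submodule.Quotient.mk_smul, Submodule.Quotient.eq,
    Module.mem_annihilator] at hab
  rw [Submodule.Quotient.eq, Module.mem_annihilator]
  intro m
  apply hx
  simpa [sub_smul, mul_smul, smul_sub] using hab m

theorem rTensor_maximalIdeal_subtype_injective_of_torIsZero {A : Type} [CommRing A]
    [IsLocalRing A] {C : Type} [AddCommGroup C] [Module A C]
    (hTor : TorIsZero A 1 C (ResidueField A)) :
    Function.Injective ((maximalIdeal A).subtype.rTensor C) := by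
  let P := projectiveResolution (ModuleCat.of A (ResidueField A))
  let F := (MonoidalCategory.tensoringLeft (ModuleCat A)).obj (ModuleCat.of A C)
  have hexact : ∀ x, (P.complex.d 1 0).hom.lTensor C x = 0 →
      ∃ y, (P.complex.d 2 1).hom.lTensor C y = x := by
    have hH : IsZero (((F.mapHomologicalComplex _).obj P.complex).homology 1) :=
      hTor.of_iso (P.isoLeftDerivedObj F 1).symm
    exact (ShortComplex.moduleCat_exact_iff _).mp
      ((HomologicalComplex.exactAt_iff' _ 2 1 0 (by simp) (by simp)).mp
        ((HomologicalComplex.exactAt_iff_isZero_homology _ 1).mpr hH))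
  have hK := lTensor_ker_subtype_injective_of_exact C _ _ _
    congr($(P.complex.d_comp_d 2 1 0).hom)
    ((ShortComplex.ShortExact.moduleCat_exact_iff_function_exact _).mp P.exact₀) hexact
  let ε : A →ₗ[A] ResidueField A := Algebra.linearMap A (ResidueField A)
  obtain ⟨p, hp⟩ := (ModuleCat.epi_iff_surjective (P.π.f 0)).mp inferInstance (ε 1)
  have hσ : (P.π.f 0).hom ∘ₗ toSpanSingleton A _ p = ε := by
    ext
    simp only [LinearMap.comp_apply, toSpanSingleton_apply, one_smul]
    exact hp
  obtain ⟨τ, hτ⟩ := Module.projective_lifting_property ε (P.π.f 0).hom residue_surjective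
  have hker : ker ε = maximalIdeal A := by
    ext x
    exact residue_eq_zero_iff x
  rw [← lTensor_inj_iff_rTensor_inj, ← hker]
  exact lTensor_ker_subtype_injective_of_comp_eq C hσ hτ hK

/-- If `(A, m, k)` is a noetherian local ring and `C` an `A`-module with `mC ≠ C` and
`Tor_1^A(C, k) = 0`, then every `C`-regular sequence is `A`-regular. -/
theorem regular_on_ring_of_regular_on_module
    (A : Type) [CommRing A] [IsLocalRing A] [IsNoetherianRing A]
    (C : Type) [AddCommGroup C] [Module A C]
    (hmC : maximalIdeal A • (⊤ : Submodule A C) ≠ ⊤)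
    (hTor : TorIsZero A 1 C (ResidueField A)) :
    ∀ rs : List A, RingTheory.Sequence.IsRegular C rs → RingTheory.Sequence.IsRegular A rs := by
  intro rs hreg
  have hann (q : Ideal A) :
      Module.annihilator A (C ⧸ q • (⊤ : Submodule A C)) = q • (⊤ : Submodule A A) := by
    rw [Ideal.annihilator_quotient_smul_top_eq C hmC
      (rTensor_maximalIdeal_subtype_injective_of_torIsZero hTor), Ideal.smul_eq_mul,
      Ideal.mul_top]
  refine ⟨⟨fun i hi => hann _ ▸ (hreg.regular_mod_prev i hi).quotient_annihilator⟩,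
    fun h => hreg.top_ne_smul ?_⟩
  rw [Ideal.smul_eq_mul, Ideal.mul_top] at h
  rw [← h, Submodule.top_smul]
end

section
/- Let (A, m, k) be a noetherian commutative local Cohen-Macaulay ring of dimension d, and let M : 0 → M_d → ... → M_0 → 0 be a complex of finitely generated free A-modules with H_0(M) finitely generated and H_i(M) of finite length for i ≥ 1. Then H_i(M) = 0 for all i ≥ 1. -/
open CategoryTheory Limits IsLocalRing

/-- A system of parameters of a local ring: a list of `ringKrullDim A` elements of the
maximal ideal generating an ideal containing a power of the maximal ideal. -/
def IsSystemOfParameters (A : Type) [CommRing A] [IsLocalRing A] (rs : List A) : Prop :=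
  (rs.length : WithBot ℕ∞) = ringKrullDim A ∧
  Ideal.span {x | x ∈ rs} ≤ IsLocalRing.maximalIdeal A ∧
  ∃ n : ℕ, IsLocalRing.maximalIdeal A ^ n ≤ Ideal.span {x | x ∈ rs}

/-- A big Cohen-Macaulay module: some system of parameters is a regular sequence on `C`. -/
def IsBigCohenMacaulay (A : Type) [CommRing A] [IsLocalRing A]
    (C : Type) [AddCommGroup C] [Module A C] : Prop :=
  ∃ rs : List A, IsSystemOfParameters A rs ∧ RingTheory.Sequence.IsRegular C rs

/-- A balanced big Cohen-Macaulay module: a big Cohen-Macaulay module on which every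
system of parameters is a regular sequence. -/
def IsBalancedBigCohenMacaulay (A : Type) [CommRing A] [IsLocalRing A]
    (C : Type) [AddCommGroup C] [Module A C] : Prop :=
  IsBigCohenMacaulay A C ∧
  ∀ rs : List A, IsSystemOfParameters A rs → RingTheory.Sequence.IsRegular C rs

/-- The depth of a local ring: supremum of lengths of regular sequences contained in the
maximal ideal. -/
noncomputable def localDepth (A : Type) [CommRing A] [IsLocalRing A] : ℕ∞ :=
  sSup {n : ℕ∞ | ∃ rs : List A, (∀ r ∈ rs, r ∈ IsLocalRing.maximalIdeal A) ∧
    RingTheory.Sequence.IsRegular A rs ∧ (rs.length : ℕ∞) = n}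

/-- A local ring is Cohen-Macaulay if its depth equals its Krull dimension. -/
def IsCohenMacaulayLocalRing (A : Type) [CommRing A] [IsLocalRing A] : Prop :=
  (localDepth A : WithBot ℕ∞) = ringKrullDim A

/-- A local ring is regular if its maximal ideal is generated by `ringKrullDim A` elements. -/
def IsRegularLocalRing' (A : Type) [CommRing A] [IsLocalRing A] : Prop :=
  ∃ s : Finset A, Ideal.span (s : Set A) = IsLocalRing.maximalIdeal A ∧
    (s.card : WithBot ℕ∞) = ringKrullDim A


/-!
Since `A` is Cohen-Macaulay of dimension `d`, the maximal ideal contains a regular sequence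
`y₁, …, y_d`, which is then weakly regular on every free `M_i`. Argue by descending induction on
`t`: once `M` is exact above `t + 1`, the cokernel `W` of `M_{t+2} → M_{t+1}` has a resolution of
length `d - t` by modules on which the `yᵢ` are weakly regular, and `H_{t+1}(M)` is the kernel of
the induced map `W → M_t`, whose target has `y₁` as a non-zero-divisor.

Such a kernel of finite length vanishes. By the snake lemma for multiplication by `y₁` on
`0 → B → G → W → 0`, the `y₁`-torsion of `W` is the kernel of `B/y₁B → G/y₁G`, a map of the same
kind one step shorter, so it vanishes by induction; hence `y₁` is a non-zero-divisor on the kernel,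
and a module of finite length with a non-zero-divisor in the maximal ideal is zero (Nakayama).
-/

open RingTheory.Sequence LinearMap Pointwise Function

universe u v

theorem exists_isWeaklyRegular_of_le_localDepth {A : Type} [CommRing A] [IsLocalRing A] {n : ℕ}
    (h : (n : ℕ∞) ≤ localDepth A) :
    ∃ rs : List A, (∀ r ∈ rs, r ∈ maximalIdeal A) ∧ IsWeaklyRegular A rs ∧ rs.length = n := by
  cases n with
  | zero => exact ⟨[], by simp, .nil A A, rfl⟩
  | succ k =>
    obtain ⟨_, ⟨rs, hrs, hreg, rfl⟩, hlt⟩ :=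
      lt_sSup_iff.mp ((ENat.natCast_lt_natCast.mpr k.lt_succ_self).trans_le h)
    have hk : k + 1 ≤ rs.length := by exact_mod_cast Order.add_one_le_of_lt hlt
    refine ⟨rs.take (k + 1), fun r hr => hrs r (List.mem_of_mem_take hr), ?_, by simpa using hk⟩
    rw [← List.take_append_drop (k + 1) rs] at hreg
    exact ((isWeaklyRegular_append_iff A _ _).mp hreg.toIsWeaklyRegular).1

variable {A : Type u} [CommRing A]

theorem IsFiniteLength.subsingleton_of_isSMulRegular [IsLocalRing A] {N : Type v}
    [AddCommGroup N] [Module A N] (hN : IsFiniteLength A N) {y : A} (hy : y ∈ maximalIdeal A)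
    (hreg : IsSMulRegular N y) : Subsingleton N := by
  obtain ⟨_, _⟩ := isFiniteLength_iff_isNoetherian_isArtinian.mp hN
  have hsurj : Surjective (lsmul A N y) :=
    IsArtinian.surjective_of_injective_endomorphism _ hreg
  have htop : (⊤ : Submodule A N) ≤ maximalIdeal A • ⊤ := fun x _ => by
    obtain ⟨z, rfl⟩ := hsurj x
    exact Submodule.smul_mem_smul hy Submodule.mem_top
  exact (Submodule.subsingleton_iff A).mp <| subsingleton_of_bot_eq_top
    (Submodule.eq_bot_of_le_smul_of_le_jacobson_bot _ ⊤ (IsNoetherian.noetherian ⊤) htop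
      (maximalIdeal_le_jacobson ⊥)).symm

theorem RingTheory.Sequence.IsWeaklyRegular.isSMulRegular_of_mem_head? {M : Type v}
    [AddCommGroup M] [Module A M] {rs : List A} (h : IsWeaklyRegular M rs) {r : A}
    (hr : r ∈ rs.head?) : IsSMulRegular M r := by
  cases rs with
  | nil => cases hr
  | cons r' rs =>
    obtain rfl : r' = r := Option.some_injective _ hr
    exact ((isWeaklyRegular_cons_iff M _ rs).mp h).1

theorem RingTheory.Sequence.IsWeaklyRegular.of_flat_module {rs : List A}
    (h : IsWeaklyRegular A rs) (M : Type v) [AddCommGroup M] [Module A M] [Module.Flat A M] :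
    IsWeaklyRegular M rs :=
  ((TensorProduct.rid A M).isWeaklyRegular_congr rs).mp h.isWeaklyRegular_lTensor

section Snake

variable {G W : Type v} [AddCommGroup G] [Module A G] [AddCommGroup W] [Module A W]
  {f : G →ₗ[A] W} (hf : Surjective f) {y : A} (hy : IsSMulRegular G y)

/-- The connecting map of the snake lemma for multiplication by `y` on `0 → ker f → G → W → 0`. -/
noncomputable def kerLsmulEquivKerQuotSMulTopMap :
    ker (lsmul A W y) ≃ₗ[A] ker (QuotSMulTop.map y (ker f).subtype) :=
  have hcomm₁ : (ker f).subtype ∘ₗ lsmul A (ker f) y = lsmul A G y ∘ₗ (ker f).subtype := rfl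
  have hcomm₂ : f ∘ₗ lsmul A G y = lsmul A W y ∘ₗ f := LinearMap.ext fun x => map_smul f y x
  have hquot (M : Type v) [AddCommGroup M] [Module A M] :
      Exact (lsmul A M y) (y • (⊤ : Submodule A M)).mkQ := by
    rw [LinearMap.exact_iff, Submodule.ker_mkQ, LinearMap.range_eq_map]; rfl
  have hreg : Exact (⊥ : Submodule A G).subtype (lsmul A G y) := by
    rw [LinearMap.exact_iff, Submodule.range_subtype, ← isSMulRegular_iff_ker_lsmul_eq_bot]
    exact hy
  let δ := SnakeLemma.δ' _ _ _ _ _ (exact_subtype_ker_map f) _ _ (exact_subtype_ker_map f)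
    hcomm₁ hcomm₂ _ (exact_subtype_ker_map _) _ (hquot _) hf Subtype.val_injective
  have hinj : Injective δ := (LinearMap.exact_zero_iff_injective _ _).mp <|
    SnakeLemma.exact_δ'_right _ _ _ _ _ _ _ _ _ _ _ _ hreg _ _ _ _ hf Subtype.val_injective 0
      (LinearMap.ext fun x => by simp [(Submodule.mem_bot A).mp x.2]) Subtype.val_injective
  have hrange : Exact δ (QuotSMulTop.map y (ker f).subtype) :=
    SnakeLemma.exact_δ'_left _ _ _ _ _ _ _ _ _ _ _ _ _ _ _ _ (hquot G) hf Subtype.val_injective _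
      (QuotSMulTop.map_comp_mkQ y _) (Submodule.mkQ_surjective _)
  (LinearEquiv.ofInjective δ hinj).trans (LinearEquiv.ofEq _ _ hrange.linearMap_ker_eq.symm)

include hf hy in
theorem isSMulRegular_iff_ker_quotSMulTop_map_eq_bot :
    IsSMulRegular W y ↔ ker (QuotSMulTop.map y (ker f).subtype) = ⊥ := by
  rw [isSMulRegular_iff_ker_lsmul_eq_bot, ← Submodule.subsingleton_iff_eq_bot,
    (kerLsmulEquivKerQuotSMulTopMap hf hy).toEquiv.subsingleton_congr,
    Submodule.subsingleton_iff_eq_bot]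

end Snake

/-- `W` has a resolution `0 → Gₙ₋₁ → ⋯ → G₀ → W → 0` by modules on which `rs` is weakly regular,
recorded one syzygy at a time. -/
def HasWeaklyRegularResolution (rs : List A) :
    ℕ → (W : Type v) → [AddCommGroup W] → [Module A W] → Prop
  | 0, W, _, _ => Subsingleton W
  | n + 1, W, _, _ => ∃ (G : Type v) (_ : AddCommGroup G) (_ : Module A G) (f : G →ₗ[A] W),
      Surjective f ∧ IsWeaklyRegular G rs ∧ HasWeaklyRegularResolution rs n (ker f)

namespace HasWeaklyRegularResolution

variable {rs : List A}

theorem of_linearEquiv {W W' : Type v} [AddCommGroup W] [Module A W] [AddCommGroup W']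
    [Module A W'] (e : W ≃ₗ[A] W') {n : ℕ} (h : HasWeaklyRegularResolution rs n W) :
    HasWeaklyRegularResolution rs n W' :=
  match n, h with
  | 0, (_ : Subsingleton W) => e.symm.toEquiv.subsingleton
  | _ + 1, ⟨G, _, _, f, hf, hG, hres⟩ => by
    refine ⟨G, _, _, e.toLinearMap ∘ₗ f, e.surjective.comp hf, hG, ?_⟩
    rwa [ker_comp, LinearEquiv.ker, Submodule.comap_bot]

theorem quotSMulTop {y : A} {n : ℕ} {W : Type v} [AddCommGroup W] [Module A W]
    (h : HasWeaklyRegularResolution (y :: rs) n W)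
    (hyW : IsSMulRegular W y) : HasWeaklyRegularResolution rs n (QuotSMulTop y W) :=
  match n, h with
  | 0, (_ : Subsingleton W) => (Submodule.mkQ_surjective _).subsingleton
  | _ + 1, ⟨G, _, _, f, hf, hG, hres⟩ => by
    obtain ⟨hyG, hG'⟩ := (isWeaklyRegular_cons_iff G y rs).mp hG
    refine ⟨QuotSMulTop y G, _, _, QuotSMulTop.map y f, QuotSMulTop.map_surjective y hf, hG', ?_⟩
    have hexact := QuotSMulTop.map_exact y (exact_subtype_ker_map f) hf
    have hinj : Injective (QuotSMulTop.map y (ker f).subtype) :=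
      ker_eq_bot.mp ((isSMulRegular_iff_ker_quotSMulTop_map_eq_bot hf hyG).mp hyW)
    exact of_linearEquiv ((LinearEquiv.ofInjective _ hinj).trans
        (LinearEquiv.ofEq _ _ hexact.linearMap_ker_eq.symm))
      (quotSMulTop hres (hyG.submodule _ _))

end HasWeaklyRegularResolution

theorem HasWeaklyRegularResolution.ker_eq_bot_of_isFiniteLength [IsLocalRing A] {rs : List A}
    (hrs : ∀ r ∈ rs, r ∈ maximalIdeal A) {n : ℕ} (hn : n ≤ rs.length)
    {W V : Type v} [AddCommGroup W] [Module A W] [AddCommGroup V] [Module A V]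
    (hW : HasWeaklyRegularResolution rs n W) (g : W →ₗ[A] V)
    (hV : ∀ r ∈ rs.head?, IsSMulRegular V r) (hfl : IsFiniteLength A (ker g)) : ker g = ⊥ :=
  match rs, n, hW with
  | _, 0, (_ : Subsingleton W) => Submodule.eq_bot_of_subsingleton
  | y :: rs, n + 1, ⟨G, _, _, f, hf, hG, hres⟩ => by
    obtain ⟨hyG, hG'⟩ := (isWeaklyRegular_cons_iff G y rs).mp hG
    have hyV : IsSMulRegular V y := hV y rfl
    have htors : ker (lsmul A W y) ≤ ker g := fun w hw => mem_ker.mpr <| hyV <| by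
      show y • g w = y • 0
      rw [smul_zero, ← map_smul, show y • w = 0 from hw, map_zero]
    have htors_fl : IsFiniteLength A (ker (lsmul A W y)) :=
      hfl.of_injective (Submodule.inclusion_injective htors)
    have hsyz : ker (QuotSMulTop.map y (ker f).subtype) = ⊥ :=
      ker_eq_bot_of_isFiniteLength (fun r hr => hrs r (List.mem_cons_of_mem y hr))
        (Nat.le_of_succ_le_succ hn) (hres.quotSMulTop (hyG.submodule _ _)) _
        (fun r hr => hG'.isSMulRegular_of_mem_head? hr)
        ((kerLsmulEquivKerQuotSMulTopMap hf hyG).isFiniteLength htors_fl)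
    have hyW : IsSMulRegular W y := (isSMulRegular_iff_ker_quotSMulTop_map_eq_bot hf hyG).mpr hsyz
    exact Submodule.subsingleton_iff_eq_bot.mp <|
      hfl.subsingleton_of_isSMulRegular (hrs y List.mem_cons_self) (hyW.submodule _ _)

section Complex

variable {X : ℕ → Type v} [∀ i, AddCommGroup (X i)] [∀ i, Module A (X i)]
  (f : ∀ i, X (i + 1) →ₗ[A] X i) {rs : List A}

theorem hasWeaklyRegularResolution_range (hX : ∀ i, IsWeaklyRegular (X i) rs) (m : ℕ) {t : ℕ}
    (hexact : ∀ i, t ≤ i → ker (f i) = range (f (i + 1)))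
    (hzero : ∀ i, t + m < i → Subsingleton (X i)) :
    HasWeaklyRegularResolution rs m (range (f t)) :=
  match m with
  | 0 =>
    have := hzero (t + 1) (by omega)
    (f t).surjective_rangeRestrict.subsingleton
  | m + 1 => by
    refine ⟨X (t + 1), _, _, (f t).rangeRestrict, (f t).surjective_rangeRestrict, hX _, ?_⟩
    rw [ker_rangeRestrict, hexact t le_rfl]
    exact hasWeaklyRegularResolution_range hX m (fun i hi => hexact i (by omega))
      (fun i hi => hzero i (by omega))

variable [IsLocalRing A] (hrs : ∀ r ∈ rs, r ∈ maximalIdeal A)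
  (hX : ∀ i, IsWeaklyRegular (X i) rs) (hzero : ∀ i, rs.length < i → Subsingleton (X i))
  (hcomp : ∀ i, f i ∘ₗ f (i + 1) = 0)
  (hfl : ∀ i, IsFiniteLength A ((ker (f i)).map (range (f (i + 1))).mkQ))
include hrs hX hzero hcomp hfl

theorem ker_eq_range_of_forall_gt (t : ℕ) (ht : t < rs.length)
    (hexact : ∀ i, t < i → ker (f i) = range (f (i + 1))) : ker (f t) = range (f (t + 1)) := by
  have hres : HasWeaklyRegularResolution rs (rs.length - (t + 1) + 1)
      (X (t + 1) ⧸ range (f (t + 1))) := by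
    refine ⟨X (t + 1), _, _, Submodule.mkQ _, Submodule.mkQ_surjective _, hX _, ?_⟩
    rw [Submodule.ker_mkQ]
    exact hasWeaklyRegularResolution_range f hX _ (fun i hi => hexact i (by omega))
      (fun i hi => hzero i (by omega))
  have hle : range (f (t + 1)) ≤ ker (f t) := range_le_ker_iff.mpr (hcomp t)
  have hker := hres.ker_eq_bot_of_isFiniteLength hrs (by omega)
    ((range (f (t + 1))).liftQ (f t) hle)
    (fun r hr => (hX t).isSMulRegular_of_mem_head? hr)
    (by rw [Submodule.ker_liftQ]; exact hfl t)
  rw [Submodule.ker_liftQ, ← le_ker_iff_map, Submodule.ker_mkQ] at hker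
  exact le_antisymm hker hle

theorem ker_eq_range_of_isFiniteLength (t : ℕ) : ker (f t) = range (f (t + 1)) := by
  rcases lt_or_ge t rs.length with ht | ht
  · exact ker_eq_range_of_forall_gt f hrs hX hzero hcomp hfl t ht
      fun i _ => ker_eq_range_of_isFiniteLength i
  · have := hzero (t + 1) (by omega)
    exact Subsingleton.elim _ _
termination_by rs.length - t

end Complex

namespace ChainComplex

variable (M : ChainComplex (ModuleCat.{v} A) ℕ) (i : ℕ)

theorem isZero_homology_succ_iff :
    IsZero (M.homology (i + 1)) ↔ ker (M.d (i + 1) i).hom = range (M.d (i + 2) (i + 1)).hom := by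
  rw [← HomologicalComplex.exactAt_iff_isZero_homology,
    HomologicalComplex.exactAt_iff' M (i + 2) (i + 1) i (prev ℕ (i + 1)) (next_nat_succ i),
    ShortComplex.moduleCat_exact_iff_range_eq_ker, eq_comm]
  rfl

noncomputable def homologySuccLinearEquiv :
    M.homology (i + 1) ≃ₗ[A]
      (ker (M.d (i + 1) i).hom).map (range (M.d (i + 2) (i + 1)).hom).mkQ :=
  let S := M.sc' (i + 2) (i + 1) i
  let φ := (range S.f.hom).mkQ ∘ₗ (ker S.g.hom).subtype
  have hker : range S.moduleCatToCycles = ker φ := by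
    rw [ker_comp, Submodule.ker_mkQ]
    ext x
    exact ⟨fun ⟨a, ha⟩ => ⟨a, congrArg Subtype.val ha⟩, fun ⟨a, ha⟩ => ⟨a, Subtype.ext ha⟩⟩
  have hrange : range φ = (ker S.g.hom).map (range S.f.hom).mkQ := by
    rw [range_comp, Submodule.range_subtype]
  (M.homologyIsoSc' _ _ _ (prev ℕ (i + 1)) (next_nat_succ i) ≪≫
      S.moduleCatHomologyIso).toLinearEquiv ≪≫ₗ
    Submodule.quotEquivOfEq _ _ hker ≪≫ₗ φ.quotKerEquivRange ≪≫ₗ LinearEquiv.ofEq _ _ hrange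

end ChainComplex

theorem homology_vanishing_of_cohenMacaulay_general
    (A : Type) [CommRing A] [IsLocalRing A]
    (hCM : IsCohenMacaulayLocalRing A)
    (d : ℕ) (hd : ringKrullDim A = d)
    (M : ChainComplex (ModuleCat A) ℕ)
    (hbound : ∀ i : ℕ, d < i → IsZero (M.X i))
    (hfree : ∀ i : ℕ, Module.Free A (M.X i))
    (hHi : ∀ i : ℕ, 1 ≤ i → IsFiniteLength A (M.homology i)) :
    ∀ i : ℕ, 1 ≤ i → IsZero (M.homology i) := by
  have hdepth : localDepth A = d := by exact_mod_cast hCM.trans hd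
  obtain ⟨rs, hrs, hreg, rfl⟩ := exists_isWeaklyRegular_of_le_localDepth hdepth.ge
  have hX (i : ℕ) : IsWeaklyRegular (M.X i) rs :=
    have := hfree i
    hreg.of_flat_module _
  have hzero (i : ℕ) (hi : rs.length < i) : Subsingleton (M.X i) :=
    ModuleCat.isZero_iff_subsingleton.mp (hbound i hi)
  have hcomp (i : ℕ) : (M.d (i + 1) i).hom ∘ₗ (M.d (i + 2) (i + 1)).hom = 0 := by
    rw [← ModuleCat.hom_comp, M.d_comp_d, ModuleCat.hom_zero]
  have hfl (i : ℕ) : IsFiniteLength A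
      ((ker (M.d (i + 1) i).hom).map (range (M.d (i + 2) (i + 1)).hom).mkQ) :=
    (M.homologySuccLinearEquiv i).isFiniteLength (hHi _ (by omega))
  intro i hi
  obtain ⟨i, rfl⟩ := Nat.exists_eq_add_of_le' hi
  rw [ChainComplex.isZero_homology_succ_iff]
  exact ker_eq_range_of_isFiniteLength (X := fun i => M.X i) (fun i => (M.d (i + 1) i).hom)
    hrs hX hzero hcomp hfl i

/-- Over a Cohen-Macaulay noetherian local ring `A` of dimension `d`, a complex of finite
free modules concentrated in degrees `0, …, d` with `H_0` finitely generated and `H_i` of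
finite length for `i ≥ 1` has vanishing higher homology. -/
theorem homology_vanishing_of_cohenMacaulay
    (A : Type) [CommRing A] [IsLocalRing A] [IsNoetherianRing A]
    (hCM : IsCohenMacaulayLocalRing A)
    (d : ℕ) (hd : ringKrullDim A = d)
    (M : ChainComplex (ModuleCat A) ℕ)
    (hbound : ∀ i : ℕ, d < i → IsZero (M.X i))
    (hfree : ∀ i : ℕ, Module.Free A (M.X i))
    (hfg : ∀ i : ℕ, Module.Finite A (M.X i))
    (hH0 : Module.Finite A (M.homology 0))
    (hHi : ∀ i : ℕ, 1 ≤ i → IsFiniteLength A (M.homology i)) :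
    ∀ i : ℕ, 1 ≤ i → IsZero (M.homology i) :=
  homology_vanishing_of_cohenMacaulay_general A hCM d hd M hbound hfree hHi
end

section
/- Let (A, m, k) be a noetherian commutative local ring, C an A-module, and I an m-primary ideal. If Tor_1^A(C, k) = 0, then Tor_1^{A/I}(C/IC, k) = 0. -/
/-!
For an ideal `J` of a ring `R`, `Tor₁^R(M, R/J)` vanishes iff `M ⊗ J → M` is injective: compute
`Tor` with a projective resolution of `R/J` that starts with `R → R/J`. So the hypothesis says
that `C ⊗_A 𝔪 → C` is injective, and the claim is that `C/IC ⊗_{A/I} 𝔪/I → C/IC` is injective.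
Lift an element of its kernel to `x ∈ C ⊗_A 𝔪`. The image of `x` in `C` lies in `IC`, so it is
also the image of some `y ∈ C ⊗_A 𝔪` coming from `C ⊗_A I`, and `y` reduces to zero modulo `I`.
Injectivity over `A` gives `x = y`, so the element was zero.
-/

open CategoryTheory Limits IsLocalRing

namespace CategoryTheory

variable {C : Type*} [Category C] [Abelian C] [EnoughProjectives C]

lemma Projective.d_comp_self {X Y : C} (f : X ⟶ Y) : Projective.d f ≫ f = 0 :=
  (Category.assoc _ _ _).trans ((congrArg _ (kernel.condition f)).trans comp_zero)

namespace ProjectiveResolution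

open Projective

variable {Z P₀ : C}

noncomputable def ofEpiComplex (p : P₀ ⟶ Z) : ChainComplex C ℕ :=
  ChainComplex.mk' P₀ (syzygies p) (d p) fun f => ⟨_, d f, d_comp_self f⟩

lemma ofEpiComplex_d_1_0 (p : P₀ ⟶ Z) : (ofEpiComplex p).d 1 0 = d p :=
  ChainComplex.mk'_d_1_0 ..

lemma ofEpiComplex_exactAt_succ (p : P₀ ⟶ Z) (n : ℕ) : (ofEpiComplex p).ExactAt (n + 1) := by
  rw [HomologicalComplex.exactAt_iff' _ (n + 2) (n + 1) n (by simp) (by simp)]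
  let e : ShortComplex.mk _ _ (d_comp_self ((ofEpiComplex p).d (n + 1) n)) ≅
      (ofEpiComplex p).sc' (n + 2) (n + 1) n := by
    refine ShortComplex.isoMk
      (ChainComplex.mk'XIso P₀ (syzygies p) (d p) (fun f => ⟨_, d f, d_comp_self f⟩) n).symm
      (Iso.refl _) (Iso.refl _) ?_ ?_
    · exact ((Iso.inv_comp_eq _).2 (ChainComplex.mk'_d ..)).trans (Category.comp_id _).symm
    · exact (Category.id_comp _).trans (Category.comp_id _).symm
  exact (ShortComplex.exact_iff_of_iso e).1 (exact_d_f _)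

instance (p : P₀ ⟶ Z) [Projective P₀] (n : ℕ) : Projective ((ofEpiComplex p).X n) := by
  obtain (_ | _ | _ | n) := n
  · assumption
  all_goals apply projective_over

noncomputable def ofEpi (p : P₀ ⟶ Z) [Projective P₀] [Epi p] : ProjectiveResolution Z where
  complex := ofEpiComplex p
  π := (ChainComplex.toSingle₀Equiv _ _).symm ⟨p, by rw [ofEpiComplex_d_1_0]; exact d_comp_self p⟩
  quasiIso := ⟨fun n => by
    cases n
    · rw [ChainComplex.quasiIsoAt₀_iff, ShortComplex.quasiIso_iff_of_zeros']
      · refine (ShortComplex.exact_and_epi_g_iff_of_iso ?_).2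
          ⟨exact_d_f p, by dsimp; infer_instance⟩
        refine ShortComplex.isoMk (Iso.refl _) (Iso.refl _) (Iso.refl _) ?_ ?_ <;> dsimp
        · exact (Category.id_comp _).trans ((Category.comp_id _).trans (ofEpiComplex_d_1_0 p)).symm
        · exact (Category.id_comp _).trans ((Category.comp_id _).trans
            (ChainComplex.toSingle₀Equiv_symm_apply_f_zero (C := ofEpiComplex p) p _)).symm
      all_goals rfl
    · rw [quasiIsoAt_iff_exactAt']
      · apply ofEpiComplex_exactAt_succ
      · apply ChainComplex.exactAt_succ_single_obj⟩

end ProjectiveResolution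

end CategoryTheory

open LinearMap TensorProduct

section Exactness

variable {R : Type*} [CommRing R] {M N P Q : Type*} [AddCommGroup M] [Module R M]
  [AddCommGroup N] [Module R N] [AddCommGroup P] [Module R P] [AddCommGroup Q] [Module R Q]

lemma Function.Exact.comp_iff_injective {f : M →ₗ[R] N} {g : N →ₗ[R] P} (i : P →ₗ[R] Q)
    (hfg : Function.Exact f g) (hg : Function.Surjective g) :
    Function.Exact f (i ∘ₗ g) ↔ Function.Injective i := by
  rw [LinearMap.exact_iff] at hfg ⊢
  rw [LinearMap.ker_comp, ← hfg, ← LinearMap.ker_eq_bot, ← Submodule.comap_bot g,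
    (Submodule.comap_injective_of_surjective hg).eq_iff]

lemma Function.Exact.lTensor_iff_injective_lTensor_subtype (T : Type*) [AddCommGroup T]
    [Module R T] {g : M →ₗ[R] N} {h : N →ₗ[R] P} (hgh : Function.Exact g h) {P' : Submodule R P}
    (hrange : range h = P') :
    Function.Exact (g.lTensor T) (h.lTensor T) ↔ Function.Injective (P'.subtype.lTensor T) := by
  subst hrange
  have hg : Function.Exact g h.rangeRestrict :=
    (Submodule.injective_subtype _).comp_exact_iff_exact.1 hgh
  rw [← (lTensor_exact T hg h.surjective_rangeRestrict).comp_iff_injective _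
    (h.rangeRestrict.lTensor_surjective T h.surjective_rangeRestrict), ← lTensor_comp]
  rfl

end Exactness

open MonoidalCategory in
theorem torIsZero_one_quotient_iff (R : Type) [CommRing R] (M : Type) [AddCommGroup M]
    [Module R M] (J : Ideal R) :
    TorIsZero R 1 M (R ⧸ J) ↔ Function.Injective (J.subtype.lTensor M) := by
  let p : ModuleCat.of R R ⟶ ModuleCat.of R (R ⧸ J) := ModuleCat.ofHom J.mkQ
  have : Projective (ModuleCat.of R R) :=
    ModuleCat.projective_of_free (Module.Basis.singleton Unit R)
  have : Epi p := (ModuleCat.epi_iff_surjective p).2 J.mkQ_surjective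
  let P := ProjectiveResolution.ofEpi p
  have hexact : Function.Exact (P.complex.d 2 1).hom (P.complex.d 1 0).hom := by
    have h := P.complex_exactAt_succ 0
    rw [HomologicalComplex.exactAt_iff' _ 2 1 0 (by simp) (by simp)] at h
    exact (ShortComplex.ShortExact.moduleCat_exact_iff_function_exact _).1 h
  have hrange : range (P.complex.d 1 0).hom = J :=
    ((ShortComplex.ShortExact.moduleCat_exact_iff_function_exact _).1
      P.exact₀).linearMap_ker_eq.symm.trans J.ker_mkQ
  refine ((P.isoLeftDerivedObj ((tensoringLeft _).obj (ModuleCat.of R M)) 1).isZero_iff).trans ?_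
  rw [HomologicalComplex.homologyFunctor_obj, ← HomologicalComplex.exactAt_iff_isZero_homology,
    HomologicalComplex.exactAt_iff' _ 2 1 0 (by simp) (by simp),
    ShortComplex.ShortExact.moduleCat_exact_iff_function_exact]
  exact hexact.lTensor_iff_injective_lTensor_subtype M hrange

section Reduction

variable {A : Type*} [CommRing A] (C : Type*) [AddCommGroup C] [Module A C] (I J : Ideal A)

noncomputable def tensorReduction :
    C ⊗[A] J →ₗ[A] (C ⧸ I • (⊤ : Submodule A C)) ⊗[A ⧸ I] J.map (Ideal.Quotient.mk I) :=
  mapOfCompatibleSMul (A ⧸ I) A A _ _ ∘ₗ TensorProduct.map (I • (⊤ : Submodule A C)).mkQ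
    (((Ideal.Quotient.mkₐ A I).toLinearMap ∘ₗ J.subtype).codRestrict
      ((J.map (Ideal.Quotient.mk I)).restrictScalars A) fun a => Ideal.mem_map_of_mem _ a.2)

@[simp] lemma tensorReduction_tmul (c : C) (a : J) :
    tensorReduction C I J (c ⊗ₜ a) =
      Submodule.Quotient.mk c ⊗ₜ ⟨Ideal.Quotient.mk I a, Ideal.mem_map_of_mem _ a.2⟩ := rfl

lemma tensorReduction_surjective : Function.Surjective (tensorReduction C I J) := by
  refine (mapOfCompatibleSMul_surjective (A ⧸ I) A A _ _).comp (map_surjective ?_ ?_)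
  · exact Submodule.mkQ_surjective _
  · rintro ⟨b, hb⟩
    obtain ⟨a, ha, rfl⟩ := (Ideal.mem_map_iff_of_surjective _ Ideal.Quotient.mk_surjective).1 hb
    exact ⟨⟨a, ha⟩, rfl⟩

lemma rid_lTensor_tensorReduction (x : C ⊗[A] J) :
    TensorProduct.rid (A ⧸ I) _ ((J.map (Ideal.Quotient.mk I)).subtype.lTensor _
        (tensorReduction C I J x)) =
      Submodule.Quotient.mk (TensorProduct.rid A C (J.subtype.lTensor C x)) := by
  induction x using TensorProduct.induction_on with
  | zero => simp
  | tmul c a => rfl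
  | add x y hx hy => simp only [map_add, hx, hy, Submodule.Quotient.mk_add]

theorem injective_lTensor_map_subtype_of_le (hIJ : I ≤ J)
    (hinj : Function.Injective (J.subtype.lTensor C)) :
    Function.Injective
      ((J.map (Ideal.Quotient.mk I)).subtype.lTensor (C ⧸ I • (⊤ : Submodule A C))) := by
  let μ : C ⊗[A] J →ₗ[A] C := (TensorProduct.rid A C).toLinearMap ∘ₗ J.subtype.lTensor C
  have hμ : Function.Injective μ := (TensorProduct.rid A C).injective.comp hinj
  have hker : I • ⊤ ≤ (ker (tensorReduction C I J)).map μ := by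
    refine Submodule.smul_le.2 fun r hr c _ => ⟨c ⊗ₜ ⟨r, hIJ hr⟩, ?_, by simp [μ]⟩
    simp only [SetLike.mem_coe, mem_ker, tensorReduction_tmul,
      Ideal.Quotient.eq_zero_iff_mem.2 hr]
    exact tmul_zero _ _
  rw [injective_iff_map_eq_zero]
  intro z hz
  obtain ⟨x, rfl⟩ := tensorReduction_surjective C I J z
  have hx : μ x ∈ I • (⊤ : Submodule A C) := by
    rw [← Submodule.Quotient.mk_eq_zero]
    exact (rid_lTensor_tensorReduction C I J x).symm.trans (by rw [hz, map_zero])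
  obtain ⟨y, hy, hyx⟩ := hker hx
  rw [← hμ hyx]
  exact hy

end Reduction

theorem tor_vanishing_of_quotient_general
    (A : Type) [CommRing A] [IsLocalRing A]
    (C : Type) [AddCommGroup C] [Module A C]
    (I : Ideal A) (hIm : I ≤ maximalIdeal A)
    (hTor : TorIsZero A 1 C (ResidueField A)) :
    TorIsZero (A ⧸ I) 1 (C ⧸ I • (⊤ : Submodule A C))
      ((A ⧸ I) ⧸ (maximalIdeal A).map (Ideal.Quotient.mk I)) :=
  (torIsZero_one_quotient_iff _ _ _).2 <|
    injective_lTensor_map_subtype_of_le C I _ hIm ((torIsZero_one_quotient_iff A C _).1 hTor)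

/-- If `(A, m, k)` is a noetherian local ring, `C` an `A`-module and `I` an `m`-primary
ideal with `Tor_1^A(C, k) = 0`, then `Tor_1^{A/I}(C/IC, k) = 0`, where `k`, the residue
field of `A`, is realised as the quotient of `A/I` by the image of `m`. -/
theorem tor_vanishing_of_quotient
    (A : Type) [CommRing A] [IsLocalRing A] [IsNoetherianRing A]
    (C : Type) [AddCommGroup C] [Module A C]
    (I : Ideal A) (hIm : I ≤ maximalIdeal A) (hmI : ∃ n : ℕ, maximalIdeal A ^ n ≤ I)
    (hTor : TorIsZero A 1 C (ResidueField A)) :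
    TorIsZero (A ⧸ I) 1 (C ⧸ I • (⊤ : Submodule A C))
      ((A ⧸ I) ⧸ (maximalIdeal A).map (Ideal.Quotient.mk I)) :=
  tor_vanishing_of_quotient_general A C I hIm hTor
end
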